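/- Fix an integer n > 1. Every global minimizer (a1,a2,b1,b2,c1,c2,d1,d2,e,f,t) of Problem (P) with c1 > 0 satisfies a1 = 1 or a1+a2+2e−c1−c2−1 = 0, i.e., at least one of the first two inequality constraints of (P) is tight. -/
import Mathlib


/-- Objective of Problem (P0). -/
noncomputable def F0 (n : ℕ) (a1 a2 b1 b2 c1 c2 d1 d2 e f : ℝ) : ℝ :=
  ((n : ℝ) - 1) * Real.sqrt (a1 ^ 2 + b1 ^ 2 + c1 ^ 2 + d1 ^ 2 + 2 * |a1 * d1 - b1 * c1|) +
    Real.sqrt 2 * Real.sqrt ((a1 + n * a2) ^ 2 + (b1 + n * b2) ^ 2 + n * e ^ 2 + n * f ^ 2)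

/-- Objective of Problem (P). -/
noncomputable def FP (n : ℕ) (a1 a2 b1 b2 c1 c2 d1 d2 e f t : ℝ) : ℝ :=
  ((n : ℝ) - 1) * Real.sqrt (a1 ^ 2 + b1 ^ 2 + c1 ^ 2 + d1 ^ 2 + 2 * t) +
    Real.sqrt 2 * Real.sqrt ((a1 + n * a2) ^ 2 + (b1 + n * b2) ^ 2 + n * e ^ 2 + n * f ^ 2)

/-- Feasible set of Problem (P0). -/
def Feas0 (n : ℕ) (a1 a2 b1 b2 c1 c2 d1 d2 e f : ℝ) : Prop :=
  1 ≤ a1 ∧ 0 ≤ a1 + a2 + 2 * e - c1 - c2 - 1 ∧ 1 ≤ b1 ∧ 0 ≤ b1 + b2 - d1 - d2 - 1 ∧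
    1 ≤ d1 ∧ 0 ≤ d1 + d2 - b1 - b2 - 2 * f - 1 ∧
    a1 + c1 + n * (a2 + c2) = 0 ∧ b1 + d1 + n * (b2 + d2) = 0

/-- Feasible set of Problem (P). -/
def FeasP (n : ℕ) (a1 a2 b1 b2 c1 c2 d1 d2 e f t : ℝ) : Prop :=
  Feas0 n a1 a2 b1 b2 c1 c2 d1 d2 e f ∧
    a1 * d1 - b1 * c1 ≤ t ∧ -(a1 * d1 - b1 * c1) ≤ t ∧ 0 ≤ t

set_option maxHeartbeats 1000000 in
/-- Proposition: at every global minimizer of Problem (P) with `c1 > 0`, at least one of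
the first two inequality constraints is tight. -/
theorem first_two_constraints_tight (n : ℕ) (hn : 1 < n)
    (a1 a2 b1 b2 c1 c2 d1 d2 e f t : ℝ)
    (hfeas : FeasP n a1 a2 b1 b2 c1 c2 d1 d2 e f t)
    (hc1 : 0 < c1)
    (hmin : ∀ a1' a2' b1' b2' c1' c2' d1' d2' e' f' t' : ℝ,
      FeasP n a1' a2' b1' b2' c1' c2' d1' d2' e' f' t' →
      FP n a1 a2 b1 b2 c1 c2 d1 d2 e f t ≤
        FP n a1' a2' b1' b2' c1' c2' d1' d2' e' f' t') :
    a1 = 1 ∨ a1 + a2 + 2 * e - c1 - c2 - 1 = 0 := by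
  by_contra hcon
  push_neg at hcon
  obtain ⟨ha1ne, hslackne⟩ := hcon
  obtain ⟨⟨ha1, hsl, hb1, hs4, hd1, hs6, heq1, heq2⟩, ht1, ht2, ht3⟩ := hfeas
  have ha1gt : 1 < a1 := lt_of_le_of_ne ha1 (Ne.symm ha1ne)
  have hσ : 0 < a1 + a2 + 2 * e - c1 - c2 - 1 := lt_of_le_of_ne hsl (Ne.symm hslackne)
  have ha1pos : 0 < a1 := by linarith
  have hn1 : (1 : ℝ) < (n : ℝ) := by exact_mod_cast hn
  have hnpos : (0 : ℝ) < (n : ℝ) := by linarith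
  have hn0 : (n : ℝ) ≠ 0 := ne_of_gt hnpos
  set s : ℝ := min ((a1 - 1) / a1) ((a1 + a2 + 2 * e - c1 - c2 - 1) / a1) with hsdef
  have hspos : 0 < s :=
    lt_min (div_pos (by linarith) ha1pos) (div_pos hσ ha1pos)
  have hsa1 : s * a1 ≤ a1 - 1 := by
    have := min_le_left ((a1 - 1) / a1) ((a1 + a2 + 2 * e - c1 - c2 - 1) / a1)
    rw [hsdef]
    calc min ((a1 - 1) / a1) ((a1 + a2 + 2 * e - c1 - c2 - 1) / a1) * a1
        ≤ (a1 - 1) / a1 * a1 := by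
          exact mul_le_mul_of_nonneg_right this ha1pos.le
      _ = a1 - 1 := by field_simp
  have hsa2 : s * a1 ≤ a1 + a2 + 2 * e - c1 - c2 - 1 := by
    have := min_le_right ((a1 - 1) / a1) ((a1 + a2 + 2 * e - c1 - c2 - 1) / a1)
    rw [hsdef]
    calc min ((a1 - 1) / a1) ((a1 + a2 + 2 * e - c1 - c2 - 1) / a1) * a1
        ≤ (a1 + a2 + 2 * e - c1 - c2 - 1) / a1 * a1 := by
          exact mul_le_mul_of_nonneg_right this ha1pos.le
      _ = a1 + a2 + 2 * e - c1 - c2 - 1 := by field_simp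
  have hslt1 : s < 1 := by nlinarith
  have h1s : 0 ≤ 1 - s := by linarith
  have hD : |a1 * d1 - b1 * c1| ≤ t := abs_le.mpr ⟨by linarith, ht1⟩
  have hDnn : 0 ≤ |a1 * d1 - b1 * c1| := abs_nonneg _
  -- the perturbed point
  have hdet' : (1 - s) * a1 * d1 - b1 * ((1 - s) * c1)
      = (1 - s) * (a1 * d1 - b1 * c1) := by ring
  have habs' : |(1 - s) * a1 * d1 - b1 * ((1 - s) * c1)|
      = (1 - s) * |a1 * d1 - b1 * c1| := by
    rw [hdet', abs_mul, abs_of_nonneg h1s]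
  have hfeas' : FeasP n ((1 - s) * a1) (a2 + s * a1 / n) b1 b2 ((1 - s) * c1)
      (c2 + s * c1 / n) d1 d2 e f ((1 - s) * |a1 * d1 - b1 * c1|) := by
    refine ⟨⟨by nlinarith, ?_, hb1, hs4, hd1, hs6, ?_, heq2⟩, ?_, ?_, ?_⟩
    · have key : (1 - s) * a1 + (a2 + s * a1 / n) + 2 * e - (1 - s) * c1
          - (c2 + s * c1 / n) - 1
          = ((a1 + a2 + 2 * e - c1 - c2 - 1) * n - s * a1 * n + s * c1 * n
              + s * a1 - s * c1) / n := by
        field_simp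
        ring
      rw [key]
      apply div_nonneg _ hnpos.le
      nlinarith [mul_le_mul_of_nonneg_right hsa2 hnpos.le,
        mul_nonneg (mul_nonneg hspos.le hc1.le) (show (0:ℝ) ≤ (n:ℝ) - 1 by linarith),
        mul_nonneg hspos.le ha1pos.le]
    · field_simp
      linarith [heq1]
    · rw [hdet']
      exact mul_le_mul_of_nonneg_left (le_abs_self _) h1s
    · rw [hdet']
      have h := neg_abs_le (a1 * d1 - b1 * c1)
      nlinarith [mul_nonneg h1s (show (0:ℝ) ≤ a1 * d1 - b1 * c1 + |a1 * d1 - b1 * c1| by linarith)]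
    · exact mul_nonneg h1s hDnn
  have hle := hmin _ _ _ _ _ _ _ _ _ _ _ hfeas'
  -- the second square-root argument is unchanged
  have e2 : (1 - s) * a1 + (n : ℝ) * (a2 + s * a1 / n) = a1 + n * a2 := by
    field_simp
    ring
  -- the first square-root argument strictly decreases
  have hnewlt : ((1 - s) * a1) ^ 2 + b1 ^ 2 + ((1 - s) * c1) ^ 2 + d1 ^ 2
      + 2 * ((1 - s) * |a1 * d1 - b1 * c1|)
      < a1 ^ 2 + b1 ^ 2 + c1 ^ 2 + d1 ^ 2 + 2 * t := by
    nlinarith [mul_nonneg hspos.le hDnn,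
      mul_pos (mul_pos hspos (show (0:ℝ) < 2 - s by linarith)) (mul_pos ha1pos ha1pos),
      mul_nonneg (mul_nonneg hspos.le (show (0:ℝ) ≤ 2 - s by linarith))
        (mul_nonneg hc1.le hc1.le), hD]
  have hnewnn : 0 ≤ ((1 - s) * a1) ^ 2 + b1 ^ 2 + ((1 - s) * c1) ^ 2 + d1 ^ 2
      + 2 * ((1 - s) * |a1 * d1 - b1 * c1|) := by
    nlinarith [sq_nonneg ((1 - s) * a1), sq_nonneg b1, sq_nonneg ((1 - s) * c1),
      sq_nonneg d1, mul_nonneg h1s hDnn]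
  have hsqrtlt := Real.sqrt_lt_sqrt hnewnn hnewlt
  have hlt : FP n ((1 - s) * a1) (a2 + s * a1 / n) b1 b2 ((1 - s) * c1)
      (c2 + s * c1 / n) d1 d2 e f ((1 - s) * |a1 * d1 - b1 * c1|)
      < FP n a1 a2 b1 b2 c1 c2 d1 d2 e f t := by
    unfold FP
    rw [e2]
    have := mul_lt_mul_of_pos_left hsqrtlt (show (0:ℝ) < (n : ℝ) - 1 by linarith)
    linarith
  linarith
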